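/- arXiv:2406.04981 — 2 statements merged into one kernel-verified Lean document; each statement's English description precedes it below -/
import Mathlib

section
/- (All separators of maximally inflated balls are max-margin) Let {(x_i, y_i)}_{i=1}^m have ℓ_p margin exactly ε*, i.e., max_{w ≠ 0} min_i y_i⟨w, x_i⟩/‖w‖_{p*} = ε*. Then any w that separates the inflated dataset, i.e., satisfies y_i⟨w, x'_i⟩ ≥ 0 for all x'_i with ‖x'_i − x_i‖_p ≤ ε* and all i, is an ℓ_r max-margin separator of the inflated dataset for every r ≥ 1; in particular the max-margin value min_i (y_i⟨w, x_i⟩ − ε*‖w‖_{p*})/‖w‖_{r*} is 0 for every separating w. -/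
noncomputable def lpNorm {d : ℕ} (p : ℝ) (w : Fin d → ℝ) : ℝ :=
  (∑ j, |w j| ^ p) ^ (1 / p)

def dotp {d : ℕ} (w x : Fin d → ℝ) : ℝ := ∑ j, w j * x j

/-!
Write `N = ‖w‖_q` with `q = p*`. Hölder's inequality is attained: `v_j = w_j |w_j|^(q-2) / N^(q-1)`
has `‖v‖_p = 1` and `⟨w, v⟩ = N`. So if `w` separates the `ℓ_p` ball of radius `ε*` around `x_i`,
testing the point `x_i - ε* y_i v` gives `y_i ⟨w, x_i⟩ ≥ ε* N`: every inflated margin of `w` is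
nonnegative. Conversely, since `ε*` is the largest `ℓ_p` margin, every `u ≠ 0` has an index `i` with
`y_i ⟨u, x_i⟩ ≤ ε* ‖u‖_q`, so no `u` has a positive inflated margin, whatever norm it is divided by.
-/

open Finset

section LpNorm

variable {d : ℕ}

lemma lpNorm_pos {s : ℝ} {w : Fin d → ℝ} (hw : w ≠ 0) : 0 < lpNorm s w := by
  obtain ⟨j, hj⟩ := Function.ne_iff.mp hw
  exact Real.rpow_pos_of_pos
    (sum_pos' (fun k _ => by positivity) ⟨j, mem_univ j, Real.rpow_pos_of_pos (abs_pos.2 hj) _⟩) _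

lemma lpNorm_rpow {p : ℝ} (hp : p ≠ 0) (w : Fin d → ℝ) : lpNorm p w ^ p = ∑ j, |w j| ^ p := by
  rw [lpNorm, ← Real.rpow_mul (by positivity), one_div_mul_cancel hp, Real.rpow_one]

lemma lpNorm_smul {p : ℝ} (hp : p ≠ 0) (c : ℝ) (v : Fin d → ℝ) :
    lpNorm p (c • v) = |c| * lpNorm p v := by
  simp only [lpNorm, Pi.smul_apply, smul_eq_mul, abs_mul,
    Real.mul_rpow (abs_nonneg c) (abs_nonneg _), ← mul_sum]
  rw [Real.mul_rpow (by positivity) (by positivity), ← Real.rpow_mul (abs_nonneg c),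
    mul_one_div_cancel hp, Real.rpow_one]

lemma dotp_smul (c : ℝ) (w v : Fin d → ℝ) : dotp w (c • v) = c * dotp w v :=
  dotProduct_smul c w v

lemma dotp_sub (w x x' : Fin d → ℝ) : dotp w (x - x') = dotp w x - dotp w x' :=
  dotProduct_sub w x x'

end LpNorm

lemma abs_mul_abs_rpow_sub_one {s : ℝ} (hs : s ≠ 0) (x : ℝ) : |x| * |x| ^ (s - 1) = |x| ^ s := by
  rw [← Real.rpow_one_add' (abs_nonneg x) (by simpa using hs), add_sub_cancel]

section HolderDual

variable {d : ℕ} {p q : ℝ}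

noncomputable def holderDual (q : ℝ) (w : Fin d → ℝ) : Fin d → ℝ :=
  fun j => w j * |w j| ^ (q - 2)

lemma abs_holderDual (hq : q ≠ 1) (w : Fin d → ℝ) (j : Fin d) :
    |holderDual q w j| = |w j| ^ (q - 1) := by
  rw [holderDual, abs_mul, abs_of_nonneg (Real.rpow_nonneg (abs_nonneg (w j)) _),
    show q - 2 = q - 1 - 1 by ring, abs_mul_abs_rpow_sub_one (sub_ne_zero.2 hq)]

lemma dotp_holderDual (hq : q ≠ 0) (hq₁ : q ≠ 1) (w : Fin d → ℝ) :
    dotp w (holderDual q w) = ∑ j, |w j| ^ q := by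
  refine sum_congr rfl fun j _ => ?_
  calc w j * holderDual q w j = |w j| * |holderDual q w j| := by
        rw [holderDual, abs_mul, abs_of_nonneg (Real.rpow_nonneg (abs_nonneg (w j)) _),
          ← mul_assoc, ← mul_assoc, abs_mul_abs_self]
    _ = |w j| ^ q := by rw [abs_holderDual hq₁, abs_mul_abs_rpow_sub_one hq]

lemma lpNorm_holderDual (hpq : p.HolderConjugate q) (w : Fin d → ℝ) :
    lpNorm p (holderDual q w) = lpNorm q w ^ (q - 1) := by
  have hq := hpq.symm
  simp only [lpNorm, abs_holderDual hq.lt.ne', ← Real.rpow_mul (abs_nonneg _),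
    hq.sub_one_mul_conj]
  rw [← Real.rpow_mul (by positivity), ← hq.div_conj_eq_sub_one]
  congr 1
  field_simp [hq.ne_zero]

theorem exists_lpNorm_eq_one_dotp_eq_lpNorm (hpq : p.HolderConjugate q) {w : Fin d → ℝ}
    (hw : w ≠ 0) : ∃ v, lpNorm p v = 1 ∧ dotp w v = lpNorm q w := by
  have hq := hpq.symm
  have hN : 0 < lpNorm q w := lpNorm_pos hw
  refine ⟨(lpNorm q w ^ (q - 1))⁻¹ • holderDual q w, ?_, ?_⟩
  · rw [lpNorm_smul hpq.ne_zero, lpNorm_holderDual hpq, abs_of_pos (by positivity),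
      inv_mul_cancel₀ (by positivity)]
  · rw [dotp_smul, dotp_holderDual hq.ne_zero hq.lt.ne', ← lpNorm_rpow hq.ne_zero,
      Real.rpow_sub_one hN.ne']
    field_simp

end HolderDual

theorem mul_lpNorm_le_of_separates_ball {d : ℕ} {p q : ℝ} (hpq : p.HolderConjugate q)
    {w x : Fin d → ℝ} (hw : w ≠ 0) {y ε : ℝ} (hy : |y| = 1) (hε : 0 ≤ ε)
    (hsep : ∀ x' : Fin d → ℝ, lpNorm p (x' - x) ≤ ε → 0 ≤ y * dotp w x') :
    ε * lpNorm q w ≤ y * dotp w x := by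
  obtain ⟨v, hv, hwv⟩ := exists_lpNorm_eq_one_dotp_eq_lpNorm hpq hw
  have hball : lpNorm p ((x - (ε * y) • v) - x) ≤ ε := by
    rw [sub_sub_cancel_left, ← neg_smul, lpNorm_smul hpq.ne_zero, hv, abs_neg, abs_mul, hy,
      abs_of_nonneg hε, mul_one, mul_one]
  have hyy : y * y = 1 := by rw [← abs_mul_abs_self, hy, one_mul]
  have h := hsep _ hball
  rw [dotp_sub, dotp_smul, hwv] at h
  linear_combination h - ε * lpNorm q w * hyy

lemma sInf_setOf_exists_eq {α ι : Type*} [InfSet α] (f : ι → α) :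
    sInf {v | ∃ i, v = f i} = ⨅ i, f i := by
  rw [iInf]
  congr
  ext
  exact exists_congr fun _ => eq_comm

lemma iInf_sub_mul_div_nonpos {ι : Type*} [Finite ι] {a : ι → ℝ} {N R ε : ℝ} (hN : 0 < N)
    (hR : 0 ≤ R) (h : ⨅ i, a i / N ≤ ε) : ⨅ i, (a i - ε * N) / R ≤ 0 := by
  cases isEmpty_or_nonempty ι
  · simp -- an empty infimum of reals is `0`
  obtain ⟨i, hi⟩ := exists_eq_ciInf_of_finite (f := fun i => a i / N)
  refine ciInf_le_of_le (Set.finite_range _).bddBelow i (div_nonpos_of_nonpos_of_nonneg ?_ hR)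
  rw [← hi, div_le_iff₀ hN] at h
  linarith

theorem all_separators_are_max_margin_general {d m : ℕ}
    (p q rc : ℝ) (hpq : p.HolderConjugate q)
    (xs : Fin m → Fin d → ℝ) (ys : Fin m → ℝ) (hy : ∀ i, ys i = 1 ∨ ys i = -1)
    (εstar : ℝ) (hεstar : 0 ≤ εstar)
    (hmargin : IsGreatest {γ : ℝ | ∃ w : Fin d → ℝ, w ≠ 0 ∧
        γ = sInf {v : ℝ | ∃ i : Fin m, v = ys i * dotp w (xs i) / lpNorm q w}}
      εstar) :
    ∀ w : Fin d → ℝ, w ≠ 0 →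
      (∀ i : Fin m, ∀ x' : Fin d → ℝ, lpNorm p (x' - xs i) ≤ εstar →
        0 ≤ ys i * dotp w x') →
      (sInf {v : ℝ | ∃ i : Fin m,
          v = (ys i * dotp w (xs i) - εstar * lpNorm q w) / lpNorm rc w} = 0 ∧
       IsGreatest {γ : ℝ | ∃ u : Fin d → ℝ, u ≠ 0 ∧
          γ = sInf {v : ℝ | ∃ i : Fin m,
            v = (ys i * dotp u (xs i) - εstar * lpNorm q u) / lpNorm rc u}}
        (sInf {v : ℝ | ∃ i : Fin m,
          v = (ys i * dotp w (xs i) - εstar * lpNorm q w) / lpNorm rc w})) := by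
  intro w hw hsep
  simp only [sInf_setOf_exists_eq] at hmargin ⊢
  have nonpos : ∀ u : Fin d → ℝ, u ≠ 0 →
      ⨅ i, (ys i * dotp u (xs i) - εstar * lpNorm q u) / lpNorm rc u ≤ 0 := fun u hu =>
    iInf_sub_mul_div_nonpos (lpNorm_pos hu) (lpNorm_pos hu).le (hmargin.2 ⟨u, hu, rfl⟩)
  have zero : ⨅ i, (ys i * dotp w (xs i) - εstar * lpNorm q w) / lpNorm rc w = 0 := by
    refine le_antisymm (nonpos w hw) (Real.iInf_nonneg fun i => div_nonneg ?_ (lpNorm_pos hw).le)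
    have hyi : |ys i| = 1 := by rcases hy i with h | h <;> simp [h]
    exact sub_nonneg.2 (mul_lpNorm_le_of_separates_ball hpq hw hyi hεstar (hsep i))
  refine ⟨zero, ⟨w, hw, rfl⟩, ?_⟩
  rintro _ ⟨u, hu, rfl⟩
  exact zero ▸ nonpos u hu

/-- If the dataset has `ℓ_p` margin exactly `ε*`, then any separator of the
maximally inflated balls is an `ℓ_r` max-margin separator of the inflated
dataset, with max-margin value `0`. -/
theorem all_separators_are_max_margin {d m : ℕ} (hm : 0 < m)
    (p q r rc : ℝ) (hpq : p.HolderConjugate q) (hr : r.HolderConjugate rc)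
    (xs : Fin m → Fin d → ℝ) (ys : Fin m → ℝ) (hy : ∀ i, ys i = 1 ∨ ys i = -1)
    (εstar : ℝ) (hεstar : 0 ≤ εstar)
    (hmargin : IsGreatest {γ : ℝ | ∃ w : Fin d → ℝ, w ≠ 0 ∧
        γ = sInf {v : ℝ | ∃ i : Fin m, v = ys i * dotp w (xs i) / lpNorm q w}}
      εstar) :
    ∀ w : Fin d → ℝ, w ≠ 0 →
      (∀ i : Fin m, ∀ x' : Fin d → ℝ, lpNorm p (x' - xs i) ≤ εstar →
        0 ≤ ys i * dotp w x') →
      (sInf {v : ℝ | ∃ i : Fin m,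
          v = (ys i * dotp w (xs i) - εstar * lpNorm q w) / lpNorm rc w} = 0 ∧
       IsGreatest {γ : ℝ | ∃ u : Fin d → ℝ, u ≠ 0 ∧
          γ = sInf {v : ℝ | ∃ i : Fin m,
            v = (ys i * dotp u (xs i) - εstar * lpNorm q u) / lpNorm rc u}}
        (sInf {v : ℝ | ∃ i : Fin m,
          v = (ys i * dotp w (xs i) - εstar * lpNorm q w) / lpNorm rc w})) :=
  all_separators_are_max_margin_general p q rc hpq xs ys hy εstar hεstar hmargin
end

section
/- Let L̃(w) = Σ_{i=1}^m exp(−y_i⟨w, x_i⟩ + ε‖w‖_{p*}) and suppose the maximum worst-case ℓ_r margin γ̃ = max_{w≠0} min_i (y_i⟨w,x_i⟩ − ε‖w‖_{p*})/‖w‖_r is positive. If along a trajectory w(t) we have log(1/L̃(w(t))) ≥ γ̃ · ‖w(t) − w₀‖_r for all t and ‖w(t)‖_r → ∞, then liminf_{t→∞} min_i (y_i⟨w(t), x_i⟩ − ε‖w(t)‖_{p*})/‖w(t)‖_r ≥ γ̃, and hence the normalized robust margin converges to the maximum robust margin γ̃. -/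
open Filter Topology Real

theorem lpNorm_zero {d : ℕ} {r : ℝ} (hr : r ≠ 0) : lpNorm r (0 : Fin d → ℝ) = 0 := by
  simp [lpNorm, zero_rpow hr, zero_rpow (inv_ne_zero hr)]

theorem lpNorm_sub_lpNorm_le {d : ℕ} {r : ℝ} (hr : 1 ≤ r) (u v : Fin d → ℝ) :
    lpNorm r u - lpNorm r v ≤ lpNorm r (u - v) := by
  have h := Real.Lp_add_le Finset.univ (u - v) v hr
  simp only [Pi.sub_apply, sub_add_cancel] at h
  simp only [lpNorm, Pi.sub_apply]
  linarith

theorem Real.log_one_div_sum_exp_neg_le {ι : Type*} [Fintype ι] (b : ι → ℝ) (i : ι) :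
    log (1 / ∑ j, exp (-b j)) ≤ b i := by
  have hle : exp (-b i) ≤ ∑ j, exp (-b j) :=
    Finset.single_le_sum (f := fun j => exp (-b j)) (fun j _ => (exp_pos _).le)
      (Finset.mem_univ i)
  rw [one_div, log_inv, neg_le]
  simpa using log_le_log (exp_pos _) hle

section RobustMargin

variable {d : ℕ} {ι : Type*} (xs : ι → Fin d → ℝ) (ys : ι → ℝ) (ε q r : ℝ)

noncomputable def robustMargin (u : Fin d → ℝ) (i : ι) : ℝ :=
  ys i * dotp u (xs i) - ε * lpNorm q u

noncomputable def normalizedRobustMargin (u : Fin d → ℝ) : ℝ :=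
  sInf {v : ℝ | ∃ i, v = robustMargin xs ys ε q u i / lpNorm r u}

theorem log_one_div_robustLoss_le_robustMargin [Fintype ι] (u : Fin d → ℝ) (i : ι) :
    log (1 / ∑ j, exp (-(ys j * dotp u (xs j)) + ε * lpNorm q u)) ≤
      robustMargin xs ys ε q u i := by
  have hexponent (j : ι) :
      -(ys j * dotp u (xs j)) + ε * lpNorm q u = -robustMargin xs ys ε q u j := by
    rw [robustMargin, neg_sub', sub_neg_eq_add]
  simp_rw [hexponent]
  exact Real.log_one_div_sum_exp_neg_le (robustMargin xs ys ε q u) i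

variable {xs ys ε q r}

theorem le_normalizedRobustMargin [Nonempty ι] {u : Fin d → ℝ} {a : ℝ}
    (hu : 0 < lpNorm r u) (h : ∀ i, a * lpNorm r u ≤ robustMargin xs ys ε q u i) :
    a ≤ normalizedRobustMargin xs ys ε q r u := by
  inhabit ι
  refine le_csInf ⟨_, default, rfl⟩ ?_
  rintro v ⟨i, rfl⟩
  exact (le_div_iff₀ hu).2 (h i)

end RobustMargin

theorem margin_convergence_general {d m : ℕ} (hm : 0 < m)
    (q r : ℝ) (hr : 1 ≤ r)
    (xs : Fin m → Fin d → ℝ) (ys : Fin m → ℝ)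
    (ε : ℝ)
    (L : (Fin d → ℝ) → ℝ)
    (hL : ∀ w, L w = ∑ i, Real.exp (-(ys i * dotp w (xs i)) + ε * lpNorm q w))
    (γ : ℝ) (hγpos : 0 < γ)
    (hγ : IsGreatest {g : ℝ | ∃ u : Fin d → ℝ, u ≠ 0 ∧
        g = sInf {v : ℝ | ∃ i : Fin m,
          v = (ys i * dotp u (xs i) - ε * lpNorm q u) / lpNorm r u}} γ)
    (w : ℝ → Fin d → ℝ)
    (h1 : ∀ t : ℝ, γ * lpNorm r (w t - w 0) ≤ Real.log (1 / L (w t)))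
    (h2 : Filter.Tendsto (fun t : ℝ => lpNorm r (w t)) Filter.atTop Filter.atTop) :
    γ ≤ Filter.liminf (fun t : ℝ => sInf {v : ℝ | ∃ i : Fin m,
        v = (ys i * dotp (w t) (xs i) - ε * lpNorm q (w t)) / lpNorm r (w t)})
      Filter.atTop ∧
    Filter.Tendsto (fun t : ℝ => sInf {v : ℝ | ∃ i : Fin m,
        v = (ys i * dotp (w t) (xs i) - ε * lpNorm q (w t)) / lpNorm r (w t)})
      Filter.atTop (nhds γ) := by
  have : Nonempty (Fin m) := ⟨⟨0, hm⟩⟩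
  set c := lpNorm r (w 0)
  have hmargin (t : ℝ) (i : Fin m) : γ * (lpNorm r (w t) - c) ≤ robustMargin xs ys ε q (w t) i :=
    calc γ * (lpNorm r (w t) - c) ≤ γ * lpNorm r (w t - w 0) :=
          mul_le_mul_of_nonneg_left (lpNorm_sub_lpNorm_le hr _ _) hγpos.le
      _ ≤ log (1 / L (w t)) := h1 t
      _ ≤ _ := hL (w t) ▸ log_one_div_robustLoss_le_robustMargin xs ys ε q (w t) i
  have hlower : ∀ᶠ t in atTop,
      γ - γ * c / lpNorm r (w t) ≤ normalizedRobustMargin xs ys ε q r (w t) := by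
    filter_upwards [h2.eventually_gt_atTop 0] with t ht
    refine le_normalizedRobustMargin ht fun i => ?_
    rw [sub_mul, div_mul_cancel₀ _ ht.ne']
    linarith [hmargin t i]
  have hupper : ∀ᶠ t in atTop, normalizedRobustMargin xs ys ε q r (w t) ≤ γ := by
    filter_upwards [h2.eventually_gt_atTop 0] with t ht
    refine hγ.2 ⟨w t, fun h0 => ?_, rfl⟩
    rw [h0, lpNorm_zero (by linarith)] at ht
    exact ht.false
  have hbound : Tendsto (fun t => γ - γ * c / lpNorm r (w t)) atTop (𝓝 γ) := by
    simpa using tendsto_const_nhds.sub (tendsto_const_nhds.div_atTop h2)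
  have hconv := tendsto_of_tendsto_of_tendsto_of_le_of_le' hbound tendsto_const_nhds hlower hupper
  exact ⟨hconv.liminf_eq.ge, hconv⟩

/-- If along a trajectory `log(1/L̃(w t)) ≥ γ̃·‖w t − w 0‖_r` and `‖w t‖_r → ∞`,
then the normalized robust margin converges to the maximum robust margin `γ̃`. -/
theorem margin_convergence {d m : ℕ} (hm : 0 < m)
    (p q r : ℝ) (hpq : p.HolderConjugate q) (hr : 1 ≤ r)
    (xs : Fin m → Fin d → ℝ) (ys : Fin m → ℝ) (hy : ∀ i, ys i = 1 ∨ ys i = -1)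
    (ε : ℝ) (hε : 0 ≤ ε)
    (L : (Fin d → ℝ) → ℝ)
    (hL : ∀ w, L w = ∑ i, Real.exp (-(ys i * dotp w (xs i)) + ε * lpNorm q w))
    (γ : ℝ) (hγpos : 0 < γ)
    (hγ : IsGreatest {g : ℝ | ∃ u : Fin d → ℝ, u ≠ 0 ∧
        g = sInf {v : ℝ | ∃ i : Fin m,
          v = (ys i * dotp u (xs i) - ε * lpNorm q u) / lpNorm r u}} γ)
    (w : ℝ → Fin d → ℝ)
    (h1 : ∀ t : ℝ, γ * lpNorm r (w t - w 0) ≤ Real.log (1 / L (w t)))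
    (h2 : Filter.Tendsto (fun t : ℝ => lpNorm r (w t)) Filter.atTop Filter.atTop) :
    γ ≤ Filter.liminf (fun t : ℝ => sInf {v : ℝ | ∃ i : Fin m,
        v = (ys i * dotp (w t) (xs i) - ε * lpNorm q (w t)) / lpNorm r (w t)})
      Filter.atTop ∧
    Filter.Tendsto (fun t : ℝ => sInf {v : ℝ | ∃ i : Fin m,
        v = (ys i * dotp (w t) (xs i) - ε * lpNorm q (w t)) / lpNorm r (w t)})
      Filter.atTop (nhds γ) :=
  margin_convergence_general hm q r hr xs ys ε L hL γ hγpos hγ w h1 h2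
end
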